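/- arXiv:1707.05530 — 8 statements merged into one kernel-verified Lean document; each statement's English description precedes it below -/
import Mathlib

section
/- Let M be a monoid satisfying an identity u ≈ v (for all substitutions of elements of M for the variables) where the sets of variables occurring in u and v differ, say variable x occurs in exactly one of u, v. Then there exists a natural number n ≥ 1 such that M satisfies x^n · y = y and y · x^n = y for all x, y ∈ M; in particular every element of M has a (two-sided) invertible power, so M is a group. -/
/-!
Substituting `a` for `x` and `1` for every other letter turns the identity into
`a ^ k = a ^ 0 = 1`, where `k ≥ 1` is the number of occurrences of `x` on the side containing it.
So `M` has an exponent, and every element is a unit.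
-/

theorem FreeMonoid.lift_mulSingle {X M : Type*} [DecidableEq X] [Monoid M] (x : X) (a : M)
    (w : FreeMonoid X) : lift (Pi.mulSingle x a) w = a ^ w.toList.count x := by
  induction w using FreeMonoid.inductionOn' with
  | one => simp
  | of_mul y w ih =>
    rw [map_mul, lift_eval_of, ih, toList_mul, toList_of, List.singleton_append,
      List.count_cons, Pi.mulSingle_apply]
    by_cases hyx : y = x
    · simp [hyx, pow_succ']
    · simp [hyx]

theorem Monoid.exponentExists_of_lift_eq {X M : Type*} [Monoid M] {u v : FreeMonoid X}
    (hid : ∀ f : X → M, FreeMonoid.lift f u = FreeMonoid.lift f v) {x : X}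
    (hu : x ∈ u.toList) (hv : x ∉ v.toList) : Monoid.ExponentExists M := by
  classical
  refine ⟨u.toList.count x, List.count_pos_iff.2 hu, fun a => ?_⟩
  simpa [FreeMonoid.lift_mulSingle, List.count_eq_zero_of_not_mem hv] using
    hid (Pi.mulSingle x a)

theorem stmt1_general {X : Type*} {M : Type*} [Monoid M]
    (u v : FreeMonoid X)
    (hid : ∀ f : X → M, FreeMonoid.lift f u = FreeMonoid.lift f v)
    (x : X) (hx : ¬ (x ∈ FreeMonoid.toList u ↔ x ∈ FreeMonoid.toList v)) :
    ∃ n : ℕ, 1 ≤ n ∧ (∀ a b : M, a ^ n * b = b ∧ b * a ^ n = b) ∧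
      ∀ a : M, ∃ b : M, a * b = 1 ∧ b * a = 1 := by
  obtain ⟨n, hn, hpow⟩ : Monoid.ExponentExists M := by
    rcases (by tauto : (x ∈ u.toList ∧ x ∉ v.toList) ∨ (x ∈ v.toList ∧ x ∉ u.toList))
      with ⟨hu, hv⟩ | ⟨hv, hu⟩
    · exact Monoid.exponentExists_of_lift_eq hid hu hv
    · exact Monoid.exponentExists_of_lift_eq (fun f => (hid f).symm) hv hu
  refine ⟨n, hn, fun a b => by simp [hpow a], fun a => ?_⟩
  obtain ⟨c, rfl⟩ := IsUnit.of_pow_eq_one (hpow a) hn.ne'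
  exact ⟨↑c⁻¹, c.mul_inv, c.inv_mul⟩

/-- If a monoid satisfies an identity u ≈ v where some letter x occurs in exactly one
of u, v, then M satisfies x^n y ≈ y ≈ y x^n for some n ≥ 1, and M is a group. -/
theorem stmt1 {X : Type*} [Infinite X] {M : Type*} [Monoid M]
    (u v : FreeMonoid X)
    (hid : ∀ f : X → M, FreeMonoid.lift f u = FreeMonoid.lift f v)
    (x : X) (hx : ¬ (x ∈ FreeMonoid.toList u ↔ x ∈ FreeMonoid.toList v)) :
    ∃ n : ℕ, 1 ≤ n ∧ (∀ a b : M, a ^ n * b = b ∧ b * a ^ n = b) ∧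
      ∀ a : M, ∃ b : M, a * b = 1 ∧ b * a = 1 :=
  stmt1_general u v hid x hx
end

section
/- A non-trivial identity u ≈ v holds in the monoid C_2 = ⟨a | a^2 = a^3⟩ with adjoined identity (equivalently, the variety defined by x^2 ≈ x^3 and xy ≈ yx) if and only if sim(u) = sim(v) and mul(u) = mul(v), where sim(w) is the set of letters occurring exactly once in w and mul(w) is the set of letters occurring at least twice in w. Concretely: the three-element commutative monoid {1, a, a^2} with a^3 = a^2 satisfies u ≈ v iff sim(u) = sim(v) and mul(u) = mul(v). -/
/-!
A valuation of the letters in the monoid `{0, 1, …, k}` with `m * n = min (m + n) k` sends a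
word `w` to the sum over its letters `x` of `(count x w) * f x`, capped at `k`. Capping at `k`
commutes with sums, and, since `c * n` is either `0` or at least `c`, it also commutes with
scaling by `n`; so the value only depends on the capped counts `min (count x w) k`. Conversely,
the valuation sending one letter to `1` and all others to `0` reads off the capped count of that
letter. For `k = 2`, the capped count records exactly whether a letter is absent, simple or
multiple.
-/

namespace Nat

theorem min_add_congr {a a' b b' k : ℕ} (ha : min a k = min a' k) (hb : min b k = min b' k) :
    min (a + b) k = min (a' + b') k := by
  omega

theorem min_mul_congr {c d k : ℕ} (h : min c k = min d k) (n : ℕ) :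
    min (c * n) k = min (d * n) k := by
  rcases Nat.eq_zero_or_pos n with rfl | hn
  · simp
  rcases lt_or_ge c k with hc | hc
  · rw [show c = d by omega]
  · have hd : k ≤ d := by omega
    have hcn : k ≤ c * n := hc.trans (Nat.le_mul_of_pos_right c hn)
    have hdn : k ≤ d * n := hd.trans (Nat.le_mul_of_pos_right d hn)
    rw [min_eq_right hcn, min_eq_right hdn]

theorem min_two_eq_min_two_iff {a b : ℕ} :
    min a 2 = min b 2 ↔ (a = 1 ↔ b = 1) ∧ (2 ≤ a ↔ 2 ≤ b) := by
  omega

end Nat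

theorem Finset.min_sum_congr {ι : Type*} {s : Finset ι} {a b : ι → ℕ} {k : ℕ}
    (h : ∀ i ∈ s, min (a i) k = min (b i) k) :
    min (∑ i ∈ s, a i) k = min (∑ i ∈ s, b i) k := by
  classical
  induction s using Finset.induction with
  | empty => rfl
  | insert i s hi ih =>
    rw [sum_insert hi, sum_insert hi]
    exact Nat.min_add_congr (h i (mem_insert_self i s))
      (ih fun j hj => h j (mem_insert_of_mem hj))

namespace List

variable {X : Type*} [DecidableEq X]

theorem sum_map_ite_eq_count (l : List X) (x : X) :
    (l.map fun y => if y = x then 1 else 0).sum = l.count x := by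
  induction l with
  | nil => rfl
  | cons a l ih => simp [count_cons, ih, add_comm]

theorem sum_map_eq_sum_count_smul_of_subset {M : Type*} [AddCommMonoid M] (l : List X)
    (f : X → M) {s : Finset X} (hs : l.toFinset ⊆ s) :
    (l.map f).sum = ∑ x ∈ s, l.count x • f x := by
  rw [Finset.sum_list_map_count]
  refine Finset.sum_subset hs fun x _ hx => ?_
  rw [count_eq_zero_of_not_mem (mt mem_toFinset.2 hx), zero_smul]

theorem min_sum_map_eq_iff_min_count_eq (k : ℕ) (u v : List X) :
    (∀ f : X → ℕ, min (u.map f).sum k = min (v.map f).sum k) ↔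
      ∀ x : X, min (u.count x) k = min (v.count x) k := by
  constructor
  · intro h x
    simpa only [sum_map_ite_eq_count] using h fun y => if y = x then 1 else 0
  · intro h f
    rw [sum_map_eq_sum_count_smul_of_subset u f Finset.subset_union_left,
      sum_map_eq_sum_count_smul_of_subset v f Finset.subset_union_right]
    exact Finset.min_sum_congr fun x _ => Nat.min_mul_congr (h x) (f x)

end List

theorem stmt3_general {X : Type*} [DecidableEq X] (u v : List X) :
    (∀ f : X → ℕ, min ((u.map f).sum) 2 = min ((v.map f).sum) 2) ↔
      ((∀ x : X, u.count x = 1 ↔ v.count x = 1) ∧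
        (∀ x : X, 2 ≤ u.count x ↔ 2 ≤ v.count x)) := by
  rw [List.min_sum_map_eq_iff_min_count_eq]
  simp only [Nat.min_two_eq_min_two_iff, forall_and]

/-- A non-trivial identity u ≈ v holds in the three-element monoid {1, a, a²} with
a³ = a² (encoded as {0,1,2} with m * n = min (m+n) 2) iff sim(u) = sim(v) and
mul(u) = mul(v). -/
theorem stmt3 {X : Type*} [DecidableEq X] (u v : List X) (huv : u ≠ v) :
    (∀ f : X → ℕ, min ((u.map f).sum) 2 = min ((v.map f).sum) 2) ↔
      ((∀ x : X, u.count x = 1 ↔ v.count x = 1) ∧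
        (∀ x : X, 2 ≤ u.count x ↔ 2 ≤ v.count x)) :=
  stmt3_general u v
end

section
/- Suppose a monoid M satisfies the identities xyx ≈ xyx², x²y² ≈ y²x², and x²y ≈ x²yx (for all x, y ∈ M). Then M satisfies the identity x z y t x y ≈ x z y t y x for all x, y, z, t ∈ M (the identity σ₂: xtyzxy ≈ xtyzyx after renaming). -/
/-- A monoid satisfying xyx ≈ xyx², x²y² ≈ y²x² and x²y ≈ x²yx satisfies σ₂. -/
theorem stmt5 {M : Type*} [Monoid M]
    (h1 : ∀ x y : M, x * y * x = x * y * x * x)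
    (h2 : ∀ x y : M, x * x * y * y = y * y * x * x)
    (h3 : ∀ x y : M, x * x * y = x * x * y * x) :
    ∀ x z y t : M, x * z * y * t * x * y = x * z * y * t * y * x := by
  intro x z y t
  have hsq : ∀ a : M, a * a = a * a * a := fun a => by simpa using h1 a 1
  have hx4 : x * x * x * x = x * x := by rw [← hsq, ← hsq]
  have hy4 : y * y * y * y = y * y := by rw [← hsq, ← hsq]
  have s1 : x*z*y*t*x*y = x*z*y*t*x*x*y := by
    simpa [mul_assoc] using congrArg (· * y) (h1 x (z*y*t))
  have s2 : x*z*y*t*x*x*y = x*z*y*t*x*x*y*x := by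
    simpa [mul_assoc] using congrArg (x*z*y*t * ·) (h3 x y)
  have s3 : x*z*y*t*x*x*y*x = x*z*y*t*x*x*y*x*x := by
    simpa [mul_assoc] using h1 x (z*y*t*x*x*y)
  have s4 : x*z*y*t*x*x*y*x*x = x*z*y*t*x*x*y*y*x*x := by
    simpa [mul_assoc] using congrArg (fun w => x*z*w*(x*x)) (h1 y (t*x*x))
  have s5 : x*z*y*t*x*x*y*y*x*x = x*z*y*t*y*y*x*x*x*x := by
    simpa [mul_assoc] using congrArg (fun w => x*z*y*t*w*(x*x)) (h2 x y)
  have s6 : x*z*y*t*y*y*x*x*x*x = x*z*y*t*y*y*x*x := by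
    simpa [mul_assoc] using congrArg (fun w => x*z*y*t*(y*y)*w) hx4
  have r1 : x*z*y*t*y*x = x*z*y*t*y*y*x := by
    simpa [mul_assoc] using congrArg (fun w => x*z*w*x) (h1 y t)
  have r2 : x*z*y*t*y*y*x = x*z*y*t*y*y*x*y := by
    simpa [mul_assoc] using congrArg (x*z*y*t * ·) (h3 y x)
  have r3 : x*z*y*t*y*y*x*y = x*z*y*t*y*y*x*y*y := by
    simpa [mul_assoc] using congrArg (x*z * ·) (h1 y (t*y*y*x))
  have r4 : x*z*y*t*y*y*x*y*y = x*z*y*t*y*y*x*x*y*y := by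
    simpa [mul_assoc] using congrArg (· * (y*y)) (h1 x (z*y*t*y*y))
  have r5 : x*z*y*t*y*y*x*x*y*y = x*z*y*t*y*y*y*y*x*x := by
    simpa [mul_assoc] using congrArg (fun w => x*z*y*t*(y*y)*w) (h2 x y)
  have r6 : x*z*y*t*y*y*y*y*x*x = x*z*y*t*y*y*x*x := by
    simpa [mul_assoc] using congrArg (fun w => x*z*y*t*w*(x*x)) hy4
  calc x*z*y*t*x*y = x*z*y*t*y*y*x*x :=
        ((((s1.trans s2).trans s3).trans s4).trans s5).trans s6
    _ = x*z*y*t*y*x := (((((r1.trans r2).trans r3).trans r4).trans r5).trans r6).symm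
end

section
/- Let M be a monoid satisfying the identities xyx ≈ xyx², x²y² ≈ y²x², x²y ≈ x²yx. Let u and v be two words in variables x_1, ..., x_k such that con(u) = con(v) = {x_1,...,x_k} and every letter occurs at least twice in u and at least twice in v. Then M satisfies u ≈ v; in fact both sides are equal in M (under every substitution) to x_1² x_2² ⋯ x_k². -/
section Aux

variable {M : Type*} [Monoid M]

private lemma sq3 (h1 : ∀ x y : M, x * y * x = x * y * x * x) (a : M) :
    a * a * a = a * a := by
  have := (h1 a 1).symm; simpa using this

private lemma h1' (h1 : ∀ x y : M, x * y * x = x * y * x * x) (x y z : M) :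
    x * (y * (x * z)) = x * (y * (x * (x * z))) := by
  have := congrArg (· * z) (h1 x y); simpa [mul_assoc] using this

private lemma h1₀ (h1 : ∀ x y : M, x * y * x = x * y * x * x) (x y : M) :
    x * (y * x) = x * (y * (x * x)) := by
  simpa [mul_assoc] using h1 x y

private lemma h3' (h3 : ∀ x y : M, x * x * y = x * x * y * x) (x y z : M) :
    x * (x * (y * (x * z))) = x * (x * (y * z)) := by
  have := congrArg (· * z) (h3 x y); simpa [mul_assoc] using this.symm

private lemma h3₀ (h3 : ∀ x y : M, x * x * y = x * x * y * x) (x y : M) :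
    x * (x * y) = x * (x * (y * x)) := by
  simpa [mul_assoc] using h3 x y

private lemma sq3' (h1 : ∀ x y : M, x * y * x = x * y * x * x) (x z : M) :
    x * (x * (x * z)) = x * (x * z) := by
  have := congrArg (· * z) (sq3 h1 x); simpa [mul_assoc] using this

private lemma sq3₀ (h1 : ∀ x y : M, x * y * x = x * y * x * x) (x : M) :
    x * (x * x) = x * x := by
  simpa [mul_assoc] using sq3 h1 x

private lemma mulS (h1 : ∀ x y : M, x * y * x = x * y * x * x)
    (h2 : ∀ x y : M, x * x * y * y = y * y * x * x)
    (h3 : ∀ x y : M, x * x * y = x * x * y * x) (a b : M) :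
    a * b * (a * b) = a * a * (b * b) := by
  simp only [mul_assoc]
  calc a * (b * (a * b))
      = a * (b * (a * (b * (a * b)))) := by
        have := (sq3₀ h1 (a * b)).symm; simpa [mul_assoc] using this
    _ = a * (b * (a * (b * (a * (a * b))))) := by rw [h1' h1 a b b]
    _ = a * (a * (a * (b * (a * (b * b))))) := by
        simpa [mul_assoc] using congrArg (· * b) (h2 (a * b) a)
    _ = a * (a * (b * (a * (b * b)))) := by rw [sq3' h1 a (b * (a * (b * b)))]
    _ = a * (a * (b * (a * b))) := by rw [← h1₀ h1 b a]
    _ = a * (a * (b * b)) := h3' h3 a b b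

private lemma absE (h1 : ∀ x y : M, x * y * x = x * y * x * x)
    (h3 : ∀ x y : M, x * x * y = x * x * y * x) (c p r : M) :
    c * (p * (c * r)) * c = c * (p * (c * r)) := by
  simp only [mul_assoc]
  calc c * (p * (c * (r * c)))
      = c * (p * (c * (c * (r * c)))) := h1' h1 c p (r * c)
    _ = c * (p * (c * (c * r))) := by rw [← h3₀ h3 c r]
    _ = c * (p * (c * r)) := (h1' h1 c p r).symm

private lemma sqsq (h1 : ∀ x y : M, x * y * x = x * y * x * x) (a : M) :
    a * a * (a * a) = a * a := by
  simp only [mul_assoc]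
  rw [sq3' h1 a a, sq3₀ h1 a]

private lemma sqcomm (h2 : ∀ x y : M, x * x * y * y = y * y * x * x) (a b : M) :
    a * a * (b * b) = b * b * (a * a) := by
  simpa [mul_assoc] using h2 a b

variable {X : Type*} [DecidableEq X]

private lemma prodSq (h1 : ∀ x y : M, x * y * x = x * y * x * x)
    (h2 : ∀ x y : M, x * x * y * y = y * y * x * x)
    (h3 : ∀ x y : M, x * x * y = x * x * y * x) (f : X → M) :
    ∀ w : List X, (w.map f).prod * (w.map f).prod = (w.map (fun x => f x * f x)).prod
  | [] => by simp
  | a :: t => by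
      simp only [List.map_cons, List.prod_cons]
      rw [mulS h1 h2 h3 (f a) ((t.map f).prod), prodSq h1 h2 h3 f t, mul_assoc]

private lemma sqProdComm (h2 : ∀ x y : M, x * x * y * y = y * y * x * x) (f : X → M) (a : X) :
    ∀ t : List X, f a * f a * (t.map (fun x => f x * f x)).prod
      = (t.map (fun x => f x * f x)).prod * (f a * f a)
  | [] => by simp
  | b :: s => by
      simp only [List.map_cons, List.prod_cons]
      rw [← mul_assoc, sqcomm h2 (f a) (f b), mul_assoc, sqProdComm h2 f a s, ← mul_assoc]

private lemma memAbsorbLeft (h1 : ∀ x y : M, x * y * x = x * y * x * x)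
    (h2 : ∀ x y : M, x * x * y * y = y * y * x * x) (f : X → M) {a : X} {t : List X}
    (h : a ∈ t) :
    f a * f a * (t.map (fun x => f x * f x)).prod = (t.map (fun x => f x * f x)).prod := by
  obtain ⟨B, C, rfl⟩ := List.append_of_mem h
  simp only [List.map_append, List.prod_append, List.map_cons, List.prod_cons]
  rw [← mul_assoc, sqProdComm h2 f a B, mul_assoc, ← mul_assoc (f a * f a),
    sqsq h1 (f a)]

private lemma prodSqDedup (h1 : ∀ x y : M, x * y * x = x * y * x * x)
    (h2 : ∀ x y : M, x * x * y * y = y * y * x * x) (f : X → M) :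
    ∀ w : List X, (w.map (fun x => f x * f x)).prod = (w.dedup.map (fun x => f x * f x)).prod
  | [] => by simp
  | a :: t => by
      by_cases h : a ∈ t
      · rw [List.dedup_cons_of_mem h, List.map_cons, List.prod_cons,
          memAbsorbLeft h1 h2 f h, prodSqDedup h1 h2 f t]
      · rw [List.dedup_cons_of_notMem h, List.map_cons, List.prod_cons, List.map_cons,
          List.prod_cons, prodSqDedup h1 h2 f t]

private lemma dupAbsorb (h1 : ∀ x y : M, x * y * x = x * y * x * x)
    (h3 : ∀ x y : M, x * x * y = x * x * y * x) (f : X → M) {x : X} {w : List X}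
    (h : List.Duplicate x w) :
    (w.map f).prod * f x = (w.map f).prod := by
  induction h with
  | cons_mem hm =>
      obtain ⟨B, C, rfl⟩ := List.append_of_mem hm
      simp only [List.map_cons, List.map_append, List.prod_cons, List.prod_append]
      exact absE h1 h3 (f x) ((B.map f).prod) ((C.map f).prod)
  | cons_duplicate _ ih =>
      simp only [List.map_cons, List.prod_cons, mul_assoc, ih]

private lemma absorbProd (f : X → M) (P : M) :
    ∀ l : List X, (∀ x ∈ l, P * f x = P) →
      P * (l.map (fun x => f x * f x)).prod = P
  | [], _ => by simp
  | a :: t, h => by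
      simp only [List.map_cons, List.prod_cons]
      rw [← mul_assoc, ← mul_assoc, h a (by simp), h a (by simp),
        absorbProd f P t (fun x hx => h x (List.mem_cons_of_mem _ hx))]

private lemma pairwiseComm (h2 : ∀ x y : M, x * x * y * y = y * y * x * x) (f : X → M) :
    ∀ l : List X, (l.map (fun x => f x * f x)).Pairwise Commute
  | [] => by simp
  | a :: t => by
      simp only [List.map_cons, List.pairwise_cons]
      refine ⟨fun b hb => ?_, pairwiseComm h2 f t⟩
      obtain ⟨y, _, rfl⟩ := List.mem_map.mp hb
      exact sqcomm h2 (f a) (f y)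

end Aux

/-- In a monoid satisfying xyx ≈ xyx², x²y² ≈ y²x², x²y ≈ x²yx, any two words with
the same content in which every letter occurs at least twice are equal; in fact both
equal x₁²x₂²⋯x_k² for an enumeration x₁,…,x_k of the content. -/
theorem stmt7 {X : Type*} [DecidableEq X] {M : Type*} [Monoid M]
    (h1 : ∀ x y : M, x * y * x = x * y * x * x)
    (h2 : ∀ x y : M, x * x * y * y = y * y * x * x)
    (h3 : ∀ x y : M, x * x * y = x * x * y * x)
    (u v : List X)
    (hcon : ∀ x : X, x ∈ u ↔ x ∈ v)
    (hu : ∀ x ∈ u, 2 ≤ u.count x)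
    (hv : ∀ x ∈ v, 2 ≤ v.count x) :
    ∃ l : List X, l.Nodup ∧ (∀ x : X, x ∈ l ↔ x ∈ u) ∧
      ∀ f : X → M,
        (u.map f).prod = (l.map (fun x => f x ^ 2)).prod ∧
        (v.map f).prod = (l.map (fun x => f x ^ 2)).prod := by
  refine ⟨u.dedup, u.nodup_dedup, fun x => List.mem_dedup, fun f => ?_⟩
  simp only [pow_two]
  -- the common value
  set e : M := (u.dedup.map (fun x => f x * f x)).prod with he
  have key : ∀ w : List X, (∀ x : X, x ∈ w ↔ x ∈ u) → (∀ x ∈ w, 2 ≤ w.count x) →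
      (w.map f).prod = e := by
    intro w hw hcw
    set P : M := (w.map f).prod with hP
    have hsq : P * P = e := by
      rw [hP, prodSq h1 h2 h3 f w, prodSqDedup h1 h2 f w, he]
      have hperm : List.Perm w.dedup u.dedup := by
        rw [List.perm_ext_iff_of_nodup w.nodup_dedup u.nodup_dedup]
        intro a; rw [List.mem_dedup, List.mem_dedup, hw a]
      exact List.Perm.prod_eq' (hperm.map _) (pairwiseComm h2 f w.dedup)
    have habs : ∀ x ∈ u.dedup, P * f x = P := by
      intro x hx
      have hxw : x ∈ w := (hw x).mpr (List.mem_dedup.mp hx)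
      exact dupAbsorb h1 h3 f (List.duplicate_iff_two_le_count.mpr (hcw x hxw))
    have hPe : P * e = P := absorbProd f P u.dedup habs
    calc P = P * e := hPe.symm
      _ = P * (P * P) := by rw [hsq]
      _ = P * P * P := (mul_assoc _ _ _).symm
      _ = P * P := sq3 h1 P
      _ = e := hsq
  exact ⟨key u (fun _ => Iff.rfl) hu, key v (fun x => (hcon x).symm) hv⟩
end

section
/- A non-trivial identity u ≈ v holds in the monoid variety D₁ = var{x² ≈ x³, x²y ≈ xyx ≈ yx²} (equivalently in the monoid S(xy)) if and only if: (1) sim(u) = sim(v) and mul(u) = mul(v), and (2) deleting all multiple letters from u and v yields the same word (the simple letters occur in the same order in u and v). -/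
/-!
In D₁ squares are central and absorb further occurrences of their root, so a word in which
`x` occurs at least twice equals `x²` times the word with every `x` deleted. Deleting the
multiple letters one at a time (which preserves the three conditions) reduces `u` and `v` to
the same word of simple letters.

Conversely, S(xy) lies in D₁. Sending one letter to `x` and all others to `1` evaluates a word
to `x ^ (number of occurrences)`, which tells apart 0, 1 and at least 2 occurrences; sending two
simple letters to `x` and `y` tells apart their two orders, since `x * y ≠ 0 = y * x`.
-/

structure IsD1 (M : Type*) [Monoid M] : Prop where
  sq_eq_pow_three (x : M) : x ^ 2 = x ^ 3
  sq_mul_eq_mul_mul_self (x y : M) : x ^ 2 * y = x * y * x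
  mul_mul_self_eq_mul_sq (x y : M) : x * y * x = y * x ^ 2

namespace IsD1

variable {M X : Type*} [Monoid M] [DecidableEq X]

theorem sq_mul_comm (hM : IsD1 M) (x y : M) : x ^ 2 * y = y * x ^ 2 :=
  (hM.sq_mul_eq_mul_mul_self x y).trans (hM.mul_mul_self_eq_mul_sq x y)

theorem sq_mul_self (hM : IsD1 M) (x : M) : x ^ 2 * x = x ^ 2 := by
  rw [← pow_succ, ← hM.sq_eq_pow_three]

theorem sq_mul_prod_map_filter_ne (hM : IsD1 M) (f : X → M) (x : X) (w : List X) :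
    f x ^ 2 * (w.map f).prod = f x ^ 2 * ((w.filter (· ≠ x)).map f).prod := by
  induction w with
  | nil => rfl
  | cons a t ih =>
    by_cases hax : a = x
    · subst hax
      simp [← mul_assoc, hM.sq_mul_self, ih]
    · rw [List.filter_cons_of_pos (by simpa), List.map_cons, List.map_cons, List.prod_cons,
        List.prod_cons, ← mul_assoc, hM.sq_mul_comm, mul_assoc, ih, ← mul_assoc,
        ← hM.sq_mul_comm, mul_assoc]

theorem mul_prod_map_of_mem (hM : IsD1 M) (f : X → M) {x : X} {w : List X} (hx : x ∈ w) :
    f x * (w.map f).prod = f x ^ 2 * ((w.filter (· ≠ x)).map f).prod := by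
  obtain ⟨p, s, rfl⟩ := List.append_of_mem hx
  have hsplit : f x * ((p.map f).prod * (f x * (s.map f).prod))
      = f x ^ 2 * ((p.map f).prod * (s.map f).prod) := by
    rw [← mul_assoc, ← mul_assoc, ← hM.sq_mul_eq_mul_mul_self, mul_assoc]
  simp only [List.map_append, List.prod_append, List.map_cons, List.prod_cons, hsplit]
  rw [← List.prod_append, ← List.map_append, hM.sq_mul_prod_map_filter_ne]
  simp [List.filter_append]

theorem prod_map_of_two_le_count (hM : IsD1 M) (f : X → M) {x : X} {w : List X}
    (hx : 2 ≤ w.count x) : (w.map f).prod = f x ^ 2 * ((w.filter (· ≠ x)).map f).prod := by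
  induction w with
  | nil => simp at hx
  | cons a t ih =>
    by_cases hax : a = x
    · subst hax
      have hat : a ∈ t := List.count_pos_iff.mp (by rw [List.count_cons_self] at hx; omega)
      rw [List.filter_cons_of_neg (by simp), List.map_cons, List.prod_cons,
        hM.mul_prod_map_of_mem f hat]
    · rw [List.count_cons_of_ne hax] at hx
      simp only [List.map_cons, List.prod_cons, List.filter_cons_of_pos (p := (· ≠ x)) (by simpa),
        ih hx, ← mul_assoc, hM.sq_mul_comm]

end IsD1

theorem List.prod_map_filter_eq_prod_map_ite {M X : Type*} [Monoid M] (p : X → Prop)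
    [DecidablePred p] (f : X → M) (w : List X) :
    ((w.filter (p ·)).map f).prod = (w.map fun a => if p a then f a else 1).prod := by
  induction w with
  | nil => rfl
  | cons a t ih => by_cases ha : p a <;> simp [ha, ih]

section SimplePart

variable {X : Type*} [DecidableEq X]

/-- The paper's `w_{mul(w)}`. -/
def simplePart (w : List X) : List X :=
  w.filter (fun a => decide (w.count a = 1))

theorem simplePart_eq_self {w : List X} (hw : ∀ x, w.count x < 2) : simplePart w = w :=
  List.filter_eq_self.mpr fun a ha => by
    have := List.count_pos_iff.mpr ha
    have := hw a
    simp only [decide_eq_true_eq]; omega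

theorem count_filter_ne (w : List X) (x a : X) :
    (w.filter (· ≠ x)).count a = if a = x then 0 else w.count a := by
  split_ifs with hax
  · subst hax; simp [List.count_eq_zero]
  · exact List.count_filter (by simpa)

theorem simplePart_filter_ne {w : List X} {x : X} (hx : w.count x ≠ 1) :
    simplePart (w.filter (· ≠ x)) = simplePart w := by
  simp only [simplePart, List.filter_filter]
  apply List.filter_congr
  intro a _
  by_cases hax : a = x
  · subst hax; simp [hx]
  · simp [hax]

theorem nodup_simplePart (w : List X) : (simplePart w).Nodup := by
  refine List.nodup_iff_count_le_one.mpr fun a => ?_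
  by_cases ha : w.count a = 1
  · rw [simplePart, List.count_filter (by simpa)]; omega
  · rw [List.count_eq_zero.mpr fun h => ha (by simpa using (List.mem_filter.mp h).2)]; omega

theorem prod_map_simplePart_eq {M : Type*} [Monoid M] {u v : List X}
    (H : ∀ f : X → M, (u.map f).prod = (v.map f).prod) (hsim : ∀ x, u.count x = 1 ↔ v.count x = 1)
    (f : X → M) : ((simplePart u).map f).prod = ((simplePart v).map f).prod := by
  rw [simplePart, simplePart, List.prod_map_filter_eq_prod_map_ite,
    List.prod_map_filter_eq_prod_map_ite]
  simp only [hsim]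
  exact H _

end SimplePart

theorem IsD1.prod_map_eq_of_simplePart_eq {M X : Type*} [Monoid M] [DecidableEq X]
    (hM : IsD1 M) (f : X → M) {u v : List X}
    (hsim : ∀ x, u.count x = 1 ↔ v.count x = 1) (hmul : ∀ x, 2 ≤ u.count x ↔ 2 ≤ v.count x)
    (hpart : simplePart u = simplePart v) : (u.map f).prod = (v.map f).prod := by
  induction hn : u.length using Nat.strong_induction_on generalizing u v with
  | _ n ih =>
  by_cases hu : ∃ x, 2 ≤ u.count x
  · obtain ⟨x, hx⟩ := hu
    rw [hM.prod_map_of_two_le_count f hx, hM.prod_map_of_two_le_count f ((hmul x).mp hx)]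
    have hlt : (u.filter (· ≠ x)).length < n := hn ▸
      List.length_filter_lt_length_iff_exists.mpr ⟨x, List.count_pos_iff.mp (by omega), by simp⟩
    refine congrArg _ (ih _ hlt (fun a => ?_) (fun a => ?_) ?_ rfl)
    · simp only [count_filter_ne]; split_ifs <;> simp [hsim a]
    · simp only [count_filter_ne]; split_ifs <;> simp [hmul a]
    · have hxv := (hmul x).mp hx
      rw [simplePart_filter_ne (by omega), simplePart_filter_ne (by omega), hpart]
  · simp only [not_exists, not_le] at hu
    have hv : ∀ x, v.count x < 2 := fun x => by have := hu x; have := hmul x; omega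
    rw [← simplePart_eq_self hu, ← simplePart_eq_self hv, hpart]

/-- The monoid `S(xy) = {1, x, y, xy, 0}`. -/
inductive SXY
  | one | x | y | xy | zero
  deriving DecidableEq

namespace SXY

instance : Fintype SXY := ⟨{one, x, y, xy, zero}, fun a => by cases a <;> decide⟩

def mul : SXY → SXY → SXY
  | one, b => b
  | a, one => a
  | x, y => xy
  | _, _ => zero

instance : Monoid SXY where
  mul := mul
  one := one
  one_mul := by decide
  mul_one := by decide
  mul_assoc := by decide

theorem x_pow_add_two (n : ℕ) : x ^ (n + 2) = zero := by
  induction n with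
  | zero => decide
  | succ n ih => rw [pow_succ, ih]; rfl

theorem x_pow_eq_x_pow {m n : ℕ} (h : x ^ m = x ^ n) : (m = 1 ↔ n = 1) ∧ (2 ≤ m ↔ 2 ≤ n) := by
  rcases m with _ | _ | m <;> rcases n with _ | _ | n <;>
    simp_all [x_pow_add_two]

theorem isD1 : IsD1 SXY := ⟨by decide, by decide, by decide⟩

variable {X : Type*} [DecidableEq X]

theorem count_iff_of_forall_prod_eq {u v : List X}
    (H : ∀ f : X → SXY, (u.map f).prod = (v.map f).prod) (c : X) :
    (u.count c = 1 ↔ v.count c = 1) ∧ (2 ≤ u.count c ↔ 2 ≤ v.count c) := by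
  have hc := H fun a => if a = c then x else 1
  rw [List.prod_map_eq_pow_single c _ fun a ha _ => if_neg ha,
    List.prod_map_eq_pow_single c _ fun a ha _ => if_neg ha, if_pos rfl] at hc
  exact x_pow_eq_x_pow hc

theorem mem_iff_of_forall_prod_eq {s t : List X} (hs : s.Nodup) (ht : t.Nodup)
    (H : ∀ f : X → SXY, (s.map f).prod = (t.map f).prod) (c : X) : c ∈ s ↔ c ∈ t := by
  have hc := (count_iff_of_forall_prod_eq H c).1
  refine ⟨fun hcs => List.count_pos_iff.mp ?_, fun hct => List.count_pos_iff.mp ?_⟩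
  · rw [hc.mp (List.count_eq_one_of_mem hs hcs)]; exact Nat.one_pos
  · rw [hc.mpr (List.count_eq_one_of_mem ht hct)]; exact Nat.one_pos

theorem eq_of_nodup_of_forall_prod_eq {s t : List X} (hs : s.Nodup) (ht : t.Nodup)
    (H : ∀ f : X → SXY, (s.map f).prod = (t.map f).prod) : s = t := by
  induction s generalizing t with
  | nil =>
    have hmem := mem_iff_of_forall_prod_eq hs ht H
    exact (List.eq_nil_iff_forall_not_mem.mpr fun c hc => by simpa using (hmem c).mpr hc).symm
  | cons a s ih =>
    have hmem := mem_iff_of_forall_prod_eq hs ht H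
    obtain _ | ⟨b, t⟩ := t
    · simpa using (hmem a).mp (by simp)
    obtain ⟨has, hs'⟩ := List.nodup_cons.mp hs
    obtain ⟨hbt, ht'⟩ := List.nodup_cons.mp ht
    -- if the heads differ, `a ↦ x, b ↦ y` evaluates `a :: s` to `x * y` and `b :: t` to `y * x`
    obtain rfl : a = b := by
      by_contra hab
      have hbs : b ∈ s := by simpa [Ne.symm hab] using (hmem b).mpr (by simp)
      have hat : a ∈ t := by simpa [hab] using (hmem a).mp (by simp)
      have hf := H fun c => if c = a then x else if c = b then y else 1
      rw [List.map_cons, List.map_cons, List.prod_cons, List.prod_cons,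
        List.prod_map_eq_pow_single b _ fun c hcb hc => by simp [hcb, ne_of_mem_of_not_mem hc has],
        List.prod_map_eq_pow_single a _ fun c hca hc => by simp [hca, ne_of_mem_of_not_mem hc hbt],
        List.count_eq_one_of_mem hs' hbs, List.count_eq_one_of_mem ht' hat] at hf
      simp [Ne.symm hab] at hf
      exact absurd hf (by decide)
    have H' : ∀ f : X → SXY, (s.map f).prod = (t.map f).prod := fun f => by
      have hf := H (Function.update f a 1)
      have hfs : s.map (Function.update f a 1) = s.map f :=
        List.map_congr_left fun c hc => Function.update_of_ne (ne_of_mem_of_not_mem hc has) _ _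
      have hft : t.map (Function.update f a 1) = t.map f :=
        List.map_congr_left fun c hc => Function.update_of_ne (ne_of_mem_of_not_mem hc hbt) _ _
      rwa [List.map_cons, List.map_cons, List.prod_cons, List.prod_cons, Function.update_self,
        one_mul, one_mul, hfs, hft] at hf
    exact congrArg _ (ih hs' ht' H')

end SXY

theorem stmt13_general {X : Type} [DecidableEq X] (u v : List X) :
    (∀ (M : Type) [Monoid M],
        (∀ x : M, x ^ 2 = x ^ 3) →
        (∀ x y : M, x ^ 2 * y = x * y * x) →
        (∀ x y : M, x * y * x = y * x ^ 2) →
        ∀ f : X → M, (u.map f).prod = (v.map f).prod) ↔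
      ((∀ x : X, u.count x = 1 ↔ v.count x = 1) ∧
        (∀ x : X, 2 ≤ u.count x ↔ 2 ≤ v.count x) ∧
        u.filter (fun a => decide (u.count a = 1)) =
          v.filter (fun a => decide (v.count a = 1))) := by
  constructor
  · intro H
    have hS := H SXY SXY.isD1.1 SXY.isD1.2 SXY.isD1.3
    have hcount := SXY.count_iff_of_forall_prod_eq hS
    refine ⟨fun c => (hcount c).1, fun c => (hcount c).2, ?_⟩
    exact SXY.eq_of_nodup_of_forall_prod_eq (nodup_simplePart u) (nodup_simplePart v)
      (prod_map_simplePart_eq hS fun c => (hcount c).1)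
  · rintro ⟨hsim, hmul, hpart⟩ M _ h1 h2 h3 f
    exact IsD1.prod_map_eq_of_simplePart_eq ⟨h1, h2, h3⟩ f hsim hmul hpart

/-- Word problem for D₁ = var{x² ≈ x³, x²y ≈ xyx ≈ yx²}: a non-trivial identity
u ≈ v holds in all monoids of D₁ iff sim(u) = sim(v), mul(u) = mul(v), and the simple
letters occur in the same order in u and v. -/
theorem stmt13 {X : Type} [DecidableEq X] (u v : List X) (huv : u ≠ v) :
    (∀ (M : Type) [Monoid M],
        (∀ x : M, x ^ 2 = x ^ 3) →
        (∀ x y : M, x ^ 2 * y = x * y * x) →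
        (∀ x y : M, x * y * x = y * x ^ 2) →
        ∀ f : X → M, (u.map f).prod = (v.map f).prod) ↔
      ((∀ x : X, u.count x = 1 ↔ v.count x = 1) ∧
        (∀ x : X, 2 ≤ u.count x ↔ 2 ≤ v.count x) ∧
        u.filter (fun a => decide (u.count a = 1)) =
          v.filter (fun a => decide (v.count a = 1))) :=
  stmt13_general u v
end

section
/- Suppose a monoid M satisfies x²y ≈ yx² and xyxzx ≈ x²yz. Let u be a word and x a letter with occ_x(u) = n ≥ 3, so u = u₁ x u₂ x u₃ ⋯ u_n x u_{n+1} with x not occurring in any u_i. Then M satisfies u ≈ x² u_x, where u_x = u₁u₂⋯u_{n+1} is u with all occurrences of x deleted. -/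
/-!
Write u = p x q x r x s. Since x² is central, xyxzx ≈ x²yz collapses the first three
occurrences of x into a single factor x², giving u ≈ x² p q r s. Taking y = z = 1 in the
same identity gives x³ ≈ x², so this central x² absorbs every remaining occurrence of x.
-/

section Monoid

variable {M : Type*} [Monoid M]

theorem commute_mul_self (h1 : ∀ x y : M, x * x * y = y * x * x) (c y : M) :
    Commute (c * c) y :=
  (h1 c y).trans (mul_assoc y c c)

theorem mul_self_mul_self_eq_mul_self (h2 : ∀ x y z : M, x * y * x * z * x = x * x * y * z)
    (c : M) : c * c * c = c * c := by
  simpa using h2 c 1 1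

theorem mul_mul_mul_mul_mul_mul_eq_mul_self_mul (h1 : ∀ x y : M, x * x * y = y * x * x)
    (h2 : ∀ x y z : M, x * y * x * z * x = x * x * y * z) (p q r s c : M) :
    p * (c * (q * (c * (r * (c * s))))) = c * c * (p * (q * (r * s))) :=
  calc p * (c * (q * (c * (r * (c * s))))) = p * (c * q * c * r * c * s) := by
        simp only [mul_assoc]
    _ = p * (c * c * (q * (r * s))) := by rw [h2, mul_assoc (c * c * q), mul_assoc (c * c)]
    _ = c * c * (p * (q * (r * s))) := ((commute_mul_self h1 c p).left_comm _).symm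

theorem mul_self_mul_prod_map_eq_prod_map_filter_ne {X : Type*} [DecidableEq X]
    (h1 : ∀ x y : M, x * x * y = y * x * x) (hcube : ∀ x : M, x * x * x = x * x)
    (f : X → M) (x : X) (w : List X) :
    f x * f x * (w.map f).prod = f x * f x * ((w.filter (· ≠ x)).map f).prod := by
  induction w with
  | nil => rfl
  | cons a w ih =>
    by_cases hax : a = x
    · subst hax
      rw [List.filter_cons_of_neg (by simp), List.map_cons, List.prod_cons, ← mul_assoc, hcube, ih]
    · rw [List.filter_cons_of_pos (by simpa using hax), List.map_cons, List.prod_cons,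
        List.map_cons, List.prod_cons, (commute_mul_self h1 _ _).left_comm, ih,
        (commute_mul_self h1 _ _).left_comm]

end Monoid

namespace List

variable {X : Type*} [DecidableEq X]

theorem exists_eq_append_cons_of_lt_count {x : X} {n : ℕ} :
    ∀ {u : List X}, n < u.count x → ∃ p t, u = p ++ x :: t ∧ n ≤ t.count x
  | [], h => by simp at h
  | a :: u, h => by
    by_cases hax : a = x
    · subst hax
      exact ⟨[], u, rfl, by simpa [Nat.lt_succ_iff] using h⟩
    · obtain ⟨p, t, rfl, ht⟩ :=
        exists_eq_append_cons_of_lt_count (by rwa [count_cons_of_ne hax] at h)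
      exact ⟨a :: p, t, rfl, ht⟩

theorem exists_eq_append_cons_append_cons_append_cons {x : X} {u : List X}
    (hx : 3 ≤ u.count x) : ∃ p q r s, u = p ++ x :: (q ++ x :: (r ++ x :: s)) := by
  obtain ⟨p, t, rfl, ht⟩ := exists_eq_append_cons_of_lt_count hx
  obtain ⟨q, t', rfl, ht'⟩ := exists_eq_append_cons_of_lt_count ht
  obtain ⟨r, s, rfl, -⟩ := exists_eq_append_cons_of_lt_count ht'
  exact ⟨p, q, r, s, rfl⟩

end List

/-- In a monoid satisfying x²y ≈ yx² and xyxzx ≈ x²yz, any word u in which a letter x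
occurs at least three times equals x² u_x, where u_x is u with all occurrences of x
deleted. -/
theorem stmt14 {X : Type*} [DecidableEq X] {M : Type*} [Monoid M]
    (h1 : ∀ x y : M, x * x * y = y * x * x)
    (h2 : ∀ x y z : M, x * y * x * z * x = x * x * y * z)
    (u : List X) (x : X) (hx : 3 ≤ u.count x) :
    ∀ f : X → M,
      (u.map f).prod =
        f x * f x * ((u.filter (fun a => decide (a ≠ x))).map f).prod := by
  intro f
  obtain ⟨p, q, r, s, rfl⟩ := List.exists_eq_append_cons_append_cons_append_cons hx
  have hfilter : (p ++ x :: (q ++ x :: (r ++ x :: s))).filter (· ≠ x) =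
      (p ++ (q ++ (r ++ s))).filter (· ≠ x) := by
    simp
  rw [hfilter, ← mul_self_mul_prod_map_eq_prod_map_filter_ne h1
    (mul_self_mul_self_eq_mul_self h2)]
  simp only [List.map_append, List.map_cons, List.prod_append, List.prod_cons]
  exact mul_mul_mul_mul_mul_mul_eq_mul_self_mul h1 h2 _ _ _ _ _
end

section
/- In any monoid M satisfying the identities x²y ≈ yx², xyxzx ≈ x²yz, σ₁: xyzxty ≈ yxzxty, σ₂: xtyzxy ≈ xtyzyx, and γ₁: y₁y₀x₁y₁x₀x₁ ≈ y₁y₀y₁x₁x₀x₁, the identity z t x z x t' ≈ z t x² z t' holds for all z, t, x, t' ∈ M. (This is the identity w₁(ε,ε) ≈ w₁'(ε,ε): z₁t₁ x z₁z₂ x t₂z₂ ≈ z₁t₁ x² z₁z₂ t₂z₂, i.e., for all z₁,t₁,z₂,t₂,x: z₁·t₁·x·z₁·z₂·x·t₂·z₂ = z₁·t₁·x·x·z₁·z₂·t₂·z₂.) -/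
/-- In a monoid satisfying x²y ≈ yx², xyxzx ≈ x²yz, σ₁, σ₂ and γ₁, the identity
w₁(ε,ε) ≈ w₁'(ε,ε) holds: z₁t₁ x z₁z₂ x t₂z₂ ≈ z₁t₁ x² z₁z₂ t₂z₂. -/
theorem stmt15 {M : Type*} [Monoid M]
    (h1 : ∀ x y : M, x * x * y = y * x * x)
    (h2 : ∀ x y z : M, x * y * x * z * x = x * x * y * z)
    (hσ1 : ∀ x y z t : M, x * y * z * x * t * y = y * x * z * x * t * y)
    (hσ2 : ∀ x t y z : M, x * t * y * z * x * y = x * t * y * z * y * x)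
    (hγ1 : ∀ y1 y0 x1 x0 : M,
      y1 * y0 * x1 * y1 * x0 * x1 = y1 * y0 * y1 * x1 * x0 * x1) :
    ∀ z1 t1 x z2 t2 : M,
      z1 * t1 * x * z1 * z2 * x * t2 * z2 = z1 * t1 * x * x * z1 * z2 * t2 * z2 := by
  intro z1 t1 x z2 t2
  have e2 : z1 * t1 * x * z1 * x = z1 * t1 * x * x * z1 := by
    have := hσ2 z1 t1 x 1
    simpa using this
  calc z1 * t1 * x * z1 * z2 * x * t2 * z2
      = z1 * t1 * (x * z1 * z2 * x * t2 * z2) := by simp [mul_assoc]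
    _ = z1 * t1 * (x * z1 * x * z2 * t2 * z2) := by rw [hγ1 x z1 z2 t2]
    _ = z1 * t1 * x * z1 * x * z2 * t2 * z2 := by simp [mul_assoc]
    _ = z1 * t1 * x * x * z1 * z2 * t2 * z2 := by rw [e2]
end

section
/- Let Φ be the identity system {xyx ≈ xyx², x²y² ≈ y²x², x²y ≈ x²yx}. In any monoid satisfying Φ together with the identity x x_k x b_k ≈ x² x_k b_k (where b_k = x_{k-1}x_k x_{k-2}x_{k-1} ⋯ x_0 x_1), the identity α_{k+1}: x_{k+1} y_{k+1} x_k x_{k+1} y_{k+1} b_k ≈ y_{k+1} x_{k+1} x_k x_{k+1} y_{k+1} b_k holds. Verify this for k = 1: if a monoid M satisfies Φ and (∀ x x₁ x₀, x·x₁·x·x₀·x₁ = x²·x₁·x₀·x₁), then M satisfies (∀ x₂ y₂ x₁ x₀, x₂·y₂·x₁·x₂·y₂·x₀·x₁ = y₂·x₂·x₁·x₂·y₂·x₀·x₁). -/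
/-- Case k = 1 of the inclusion J_k^k ⊆ F_{k+1}: a monoid satisfying
Φ = {xyx ≈ xyx², x²y² ≈ y²x², x²y ≈ x²yx} and x x₁ x x₀ x₁ ≈ x² x₁ x₀ x₁
satisfies α₂ : x₂y₂x₁x₂y₂x₀x₁ ≈ y₂x₂x₁x₂y₂x₀x₁. -/
theorem stmt16 {M : Type*} [Monoid M]
    (h1 : ∀ x y : M, x * y * x = x * y * x * x)
    (h2 : ∀ x y : M, x * x * y * y = y * y * x * x)
    (h3 : ∀ x y : M, x * x * y = x * x * y * x)
    (h4 : ∀ x x1 x0 : M, x * x1 * x * x0 * x1 = x * x * x1 * x0 * x1) :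
    ∀ x2 y2 x1 x0 : M,
      x2 * y2 * x1 * x2 * y2 * x0 * x1 = y2 * x2 * x1 * x2 * y2 * x0 * x1 := by
  intro x2 y2 x1 x0
  have key : (x2 * (y2 * (x1 * (x2 * (y2 * (x0 * x1)))))) = (y2 * (x2 * (x1 * (x2 * (y2 * (x0 * x1)))))) := by
    calc
      (x2 * (y2 * (x1 * (x2 * (y2 * (x0 * x1)))))) = (((((x2 * y2) * x1) * (x2 * y2)) * x0) * x1) := by simp only [mul_assoc, one_mul, mul_one]
    _ = (((((x2 * y2) * (x2 * y2)) * x1) * x0) * x1) := by conv_lhs => rw [h4 (x2 * y2) x1 x0]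
    _ = (x2 * (y2 * (x2 * (y2 * (x1 * (x0 * x1)))))) := by simp only [mul_assoc, one_mul, mul_one]
    _ = (((((x2 * y2) * x2) * (1:M)) * y2) * (x1 * (x0 * x1))) := by simp only [mul_assoc, one_mul, mul_one]
    _ = (((((x2 * x2) * y2) * (1:M)) * y2) * (x1 * (x0 * x1))) := by conv_lhs => rw [h4 x2 y2 (1:M)]
    _ = (x2 * (x2 * (y2 * (y2 * (x1 * (x0 * x1)))))) := by simp only [mul_assoc, one_mul, mul_one]
    _ = ((((x2 * x2) * y2) * y2) * (x1 * (x0 * x1))) := by simp only [mul_assoc, one_mul, mul_one]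
    _ = ((((y2 * y2) * x2) * x2) * (x1 * (x0 * x1))) := by conv_lhs => rw [h2 x2 y2]
    _ = (y2 * (y2 * (x2 * (x2 * (x1 * (x0 * x1)))))) := by simp only [mul_assoc, one_mul, mul_one]
    _ = ((y2 * y2) * (((x2 * x2) * (x1 * x0)) * x1)) := by simp only [mul_assoc, one_mul, mul_one]
    _ = ((y2 * y2) * ((((x2 * x2) * (x1 * x0)) * x2) * x1)) := by conv_lhs => rw [h3 x2 (x1 * x0)]
    _ = (y2 * (y2 * (x2 * (x2 * (x1 * (x0 * (x2 * x1))))))) := by simp only [mul_assoc, one_mul, mul_one]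
    _ = ((y2 * y2) * (((x2 * x2) * (x1 * x0)) * (x2 * x1))) := by simp only [mul_assoc, one_mul, mul_one]
    _ = ((y2 * y2) * ((((x2 * x2) * (x1 * x0)) * x2) * (x2 * x1))) := by conv_lhs => rw [h3 x2 (x1 * x0)]
    _ = (y2 * (y2 * (x2 * (x2 * (x1 * (x0 * (x2 * (x2 * x1)))))))) := by simp only [mul_assoc, one_mul, mul_one]
    _ = ((((y2 * y2) * (x2 * (x2 * x1))) * x0) * (x2 * (x2 * x1))) := by simp only [mul_assoc, one_mul, mul_one]
    _ = ((((y2 * (x2 * (x2 * x1))) * y2) * x0) * (x2 * (x2 * x1))) := by conv_lhs => rw [← h4 y2 (x2 * (x2 * x1)) x0]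
    _ = (y2 * (x2 * (x2 * (x1 * (y2 * (x0 * (x2 * (x2 * x1)))))))) := by simp only [mul_assoc, one_mul, mul_one]
    _ = (y2 * ((((x2 * x2) * (x1 * (y2 * x0))) * x2) * (x2 * x1))) := by simp only [mul_assoc, one_mul, mul_one]
    _ = (y2 * (((x2 * x2) * (x1 * (y2 * x0))) * (x2 * x1))) := by conv_lhs => rw [← h3 x2 (x1 * (y2 * x0))]
    _ = (y2 * (x2 * (x2 * (x1 * (y2 * (x0 * (x2 * x1))))))) := by simp only [mul_assoc, one_mul, mul_one]
    _ = (y2 * ((((x2 * x2) * (x1 * (y2 * x0))) * x2) * x1)) := by simp only [mul_assoc, one_mul, mul_one]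
    _ = (y2 * (((x2 * x2) * (x1 * (y2 * x0))) * x1)) := by conv_lhs => rw [← h3 x2 (x1 * (y2 * x0))]
    _ = (y2 * (x2 * (x2 * (x1 * (y2 * (x0 * x1)))))) := by simp only [mul_assoc, one_mul, mul_one]
    _ = (y2 * ((((x2 * x2) * x1) * (y2 * x0)) * x1)) := by simp only [mul_assoc, one_mul, mul_one]
    _ = (y2 * ((((x2 * x1) * x2) * (y2 * x0)) * x1)) := by conv_lhs => rw [← h4 x2 x1 (y2 * x0)]
    _ = (y2 * (x2 * (x1 * (x2 * (y2 * (x0 * x1)))))) := by simp only [mul_assoc, one_mul, mul_one]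
  simpa only [mul_assoc] using key
end
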